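/- If NFD's solution to an instance (I,J) of Variable-Sized Bin Covering with unit supply has exactly k ≥ 1 well-covered bins, then OPT(I,J) ≤ (2 + 1/k)·NFD(I,J). -/

import Mathlib

open scoped Classical

noncomputable section

namespace BinCov

/-- Profit of a solution `S` on the bin set `B`: a bin `i ∈ B` earns profit `p i`
if the total size of the items assigned to it is at least its demand `d i`. -/
def profit (d p s : ℕ → ℝ) (B : Finset ℕ) (S : ℕ → Finset ℕ) : ℝ :=
  ∑ i ∈ B, if d i ≤ ∑ j ∈ S i, s j then p i else 0

/-- A solution assigns pairwise disjoint subsets of the item set `T` to the bins. -/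
def IsSolution (T : Finset ℕ) (S : ℕ → Finset ℕ) : Prop :=
  (∀ i, S i ⊆ T) ∧ Pairwise fun i i' => Disjoint (S i) (S i')

/-- Optimal profit over all solutions on bins `B` and items `T`. -/
def OPT (d p s : ℕ → ℝ) (B T : Finset ℕ) : ℝ :=
  sSup (profit d p s B '' {S | IsSolution T S})

/-- Take a minimal prefix of `items` whose total size reaches `dem`;
returns this prefix together with the remaining items. -/
def takeFill (s : ℕ → ℝ) : ℝ → List ℕ → List ℕ × List ℕ
  | _, [] => ([], [])
  | dem, j :: rest =>
    if dem ≤ s j then ([j], rest)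
    else
      let q := takeFill s (dem - s j) rest
      (j :: q.1, q.2)

/-- Next Fit Decreasing on the list `bins` of bins and the list `items` of still
unassigned items (both by index, i.e. in non-increasing order of demand resp. size):
if the unassigned items cannot cover the current bin, it is left empty; otherwise a
minimal prefix of the unassigned items is assigned to it.  Returns, for each bin,
the set of items assigned to it. -/
def nfdAux (d s : ℕ → ℝ) : List ℕ → List ℕ → ℕ → Finset ℕ
  | [], _, _ => ∅
  | i :: bins, items, b =>
    if d i ≤ (items.map s).sum then
      let q := takeFill s (d i) items
      if b = i then q.1.toFinset else nfdAux d s bins q.2 b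
    else
      if b = i then ∅ else nfdAux d s bins items b

/-- The solution produced by NFD on bin set `B` and item set `T` (bins and items are
processed in increasing order of index; demands and sizes are non-increasing in the index). -/
def nfdSol (d s : ℕ → ℝ) (B T : Finset ℕ) : ℕ → Finset ℕ :=
  nfdAux d s (B.sort (· ≤ ·)) (T.sort (· ≤ ·))

/-- The total size `u i` that NFD assigns to bin `i`. -/
def nfdU (d s : ℕ → ℝ) (B T : Finset ℕ) (i : ℕ) : ℝ :=
  ∑ j ∈ nfdSol d s B T i, s j

/-- The profit NFD earns (Variable-Sized Bin Covering: the profit of a bin is its demand). -/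
def NFD (d s : ℕ → ℝ) (B T : Finset ℕ) : ℝ :=
  profit d d s B (nfdSol d s B T)

/-- A bin `istar` with `u istar > 0` in NFD's solution (bins `0,…,m-1`, items `T`) is
well-covered if for the smallest index `i' > istar` with `u i' = 0` (which must exist)
one has `u i ≤ 2 * d i` for all bins `i ≤ i'`. -/
def WellCovered (d s : ℕ → ℝ) (m : ℕ) (T : Finset ℕ) (istar : ℕ) : Prop :=
  istar < m ∧ 0 < nfdU d s (Finset.range m) T istar ∧
    ∃ i', istar < i' ∧ i' < m ∧ nfdU d s (Finset.range m) T i' = 0 ∧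
      (∀ i, istar < i → i < i' → nfdU d s (Finset.range m) T i ≠ 0) ∧
      ∀ i ≤ i', nfdU d s (Finset.range m) T i ≤ 2 * d i

/-- `istar` is the head of the instance: letting `i0` be the smallest index of a non-empty
bin of NFD's solution that is not well-covered, and `i1 ≥ i0` the smallest index with
`u (i1+1) = 0`, the head is the largest index `istar ≤ i1` with `u istar > 2 * d istar`. -/
def IsHead (d s : ℕ → ℝ) (m : ℕ) (T : Finset ℕ) (istar : ℕ) : Prop :=
  ∃ i0 i1,
    i0 < m ∧ 0 < nfdU d s (Finset.range m) T i0 ∧ ¬ WellCovered d s m T i0 ∧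
    (∀ i < i0, 0 < nfdU d s (Finset.range m) T i → WellCovered d s m T i) ∧
    i0 ≤ i1 ∧ nfdU d s (Finset.range m) T (i1 + 1) = 0 ∧
    (∀ i, i0 ≤ i → i < i1 → nfdU d s (Finset.range m) T (i + 1) ≠ 0) ∧
    istar ≤ i1 ∧ 2 * d istar < nfdU d s (Finset.range m) T istar ∧
    (∀ i ≤ i1, 2 * d i < nfdU d s (Finset.range m) T i → i ≤ istar)

/-- The inner loop of `ALG*` on one bin: `dcap` is the bin's demand (items are admissible iff
their size is at most `dcap`), `space` is the part of the demand not yet covered, and `rem j`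
is the still unassigned part of item `j` (items `0,…,n-1`, sizes non-increasing in the index).
While the bin is not covered and some admissible item is not fully assigned, the largest such
item (i.e. the one of smallest index) is taken and its remaining part is assigned to the bin,
splitting it so that the bin is exactly covered if it would overflow.
Returns the updated remainders together with the total amount assigned to the bin. -/
def fillBin (s : ℕ → ℝ) (n : ℕ) (dcap : ℝ) : ℕ → ℝ → (ℕ → ℝ) → (ℕ → ℝ) × ℝ
  | 0, _, rem => (rem, 0)
  | fuel + 1, space, rem =>
    if h : ∃ j, j < n ∧ s j ≤ dcap ∧ 0 < rem j then
      let j := Nat.find h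
      if rem j ≤ space then
        let q := fillBin s n dcap fuel (space - rem j) (Function.update rem j 0)
        (q.1, q.2 + rem j)
      else
        (Function.update rem j (rem j - space), space)
    else (rem, 0)

/-- The outer loop of `ALG*`: the bins are processed in the given order (non-increasing
efficiency); returns the total amount assigned to each bin. -/
def algStarFillAux (d s : ℕ → ℝ) (n : ℕ) : List ℕ → (ℕ → ℝ) → ℕ → ℝ
  | [], _, _ => 0
  | i :: bins, rem, b =>
    let q := fillBin s n (d i) n (d i) rem
    if b = i then q.2 else algStarFillAux d s n bins q.1 b

/-- The total amount `ALG*` assigns to each bin, on the instance with bins `0,…,m-1`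
(in non-increasing order of efficiency) and items `0,…,n-1` (in non-increasing order of size). -/
def algStarFill (m n : ℕ) (d s : ℕ → ℝ) : ℕ → ℝ :=
  algStarFillAux d s n (List.range m) fun j => if j < n then s j else 0

/-- The modified profit `p*` of the solution produced by `ALG*`. -/
def algStarPStar (m n : ℕ) (d p s : ℕ → ℝ) : ℝ :=
  ∑ i ∈ Finset.range m, p i * min (algStarFill m n d s i / d i) 1

/-- The optimum of the linear program for the modified Bin Covering problem. -/
def LPOpt (m n : ℕ) (d p s : ℕ → ℝ) : ℝ :=
  sSup {v : ℝ | ∃ y : ℕ → ℝ, ∃ x : ℕ → ℕ → ℝ,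
    (∀ i < m, y i ≤ (∑ j ∈ Finset.range n, x j i) / d i) ∧
    (∀ j < n, ∑ i ∈ Finset.range m, x j i ≤ s j) ∧
    (∀ i, 0 ≤ y i ∧ y i ≤ 1) ∧
    (∀ j i, 0 ≤ x j i) ∧
    (∀ j < n, ∀ i < m, d i < s j → x j i = 0) ∧
    v = ∑ i ∈ Finset.range m, p i * y i}

/-- A solution of the modified Bin Covering problem, assigning item parts from the
finite set `P` (part `q ∈ P` belongs to item `itm q`) to the bins `0,…,m-1`;
a part may only be assigned to a bin to which its item is admissible. -/
def IsPartSolution (m : ℕ) (d s : ℕ → ℝ) (itm : ℕ → ℕ) (P : Finset ℕ) (S : ℕ → Finset ℕ) : Prop :=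
  (∀ i, S i ⊆ P) ∧ (Pairwise fun i i' => Disjoint (S i) (S i')) ∧
  (∀ i < m, ∀ q ∈ S i, s (itm q) ≤ d i) ∧ (∀ i, m ≤ i → S i = ∅)

/-- The modified profit `p*` of a solution, where `psz q` is the size of part `q`. -/
def pStarParts (m : ℕ) (d p psz : ℕ → ℝ) (S : ℕ → Finset ℕ) : ℝ :=
  ∑ i ∈ Finset.range m, p i * min ((∑ q ∈ S i, psz q) / d i) 1

/-- A solution of the modified Bin Covering problem is maximal if there are no two distinct
bins `i`, `i'` with `0 < s(S_i) < d_i`, `0 < s(S_i') < d_i'` and `e_i ≤ e_i'` such that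
some item of `S_i` is admissible to bin `i'`. -/
def MaximalMod (m : ℕ) (d p s : ℕ → ℝ) (S : ℕ → Finset ℕ) : Prop :=
  ¬ ∃ i i', i < m ∧ i' < m ∧ i ≠ i' ∧
      (0 < ∑ j ∈ S i, s j) ∧ (∑ j ∈ S i, s j) < d i ∧
      (0 < ∑ j ∈ S i', s j) ∧ (∑ j ∈ S i', s j) < d i' ∧
      p i / d i ≤ p i' / d i' ∧ ∃ j ∈ S i, s j ≤ d i'

/-- A solution induced by a matching in the bipartite graph on bins and items with an
edge `ij` whenever `s j > d i`: every bin receives at most one item, and any item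
assigned to a bin covers it singularly. -/
def IsMatchingSol (m n : ℕ) (d s : ℕ → ℝ) (S : ℕ → Finset ℕ) : Prop :=
  IsSolution (Finset.range n) S ∧ (∀ i, (S i).card ≤ 1) ∧ ∀ i < m, ∀ j ∈ S i, d i < s j

end BinCov

namespace BinCov

def remA (d s : ℕ → ℝ) : List ℕ → List ℕ → List ℕ
  | [], items => items
  | i :: bins, items =>
    if d i ≤ (items.map s).sum then remA d s bins (takeFill s (d i) items).2
    else remA d s bins items

variable (d s : ℕ → ℝ)

lemma takeFill_append (c : ℝ) (l : List ℕ) :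
    (takeFill s c l).1 ++ (takeFill s c l).2 = l := by
  induction l generalizing c with
  | nil => simp [takeFill]
  | cons j rest ih =>
    rw [takeFill]
    split_ifs with h
    · rfl
    · simpa using ih _

lemma takeFill_fst_sum (c : ℝ) (l : List ℕ) (h : c ≤ (l.map s).sum) :
    c ≤ (((takeFill s c l).1).map s).sum := by
  induction l generalizing c with
  | nil => simpa [takeFill] using h
  | cons j rest ih =>
    rw [takeFill]
    split_ifs with h1
    · simpa using h1
    · simp only [List.map_cons, List.sum_cons] at h ⊢
      have := ih (c - s j) (by linarith)
      linarith

lemma takeFill_fst_sublist (c : ℝ) (l : List ℕ) : List.Sublist (takeFill s c l).1 l := by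
  conv_rhs => rw [← takeFill_append s c l]
  exact List.sublist_append_left _ _

lemma takeFill_snd_sublist (c : ℝ) (l : List ℕ) : List.Sublist (takeFill s c l).2 l := by
  conv_rhs => rw [← takeFill_append s c l]
  exact List.sublist_append_right _ _

lemma nfdAux_cons_ne (i : ℕ) (bins items : List ℕ) (b : ℕ) (hbne : b ≠ i) :
    nfdAux d s (i :: bins) items b =
      if d i ≤ (items.map s).sum then nfdAux d s bins (takeFill s (d i) items).2 b
      else nfdAux d s bins items b := by
  rw [nfdAux]
  by_cases h : d i ≤ (items.map s).sum
  · simp only [if_pos h, if_neg hbne]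
  · simp only [if_neg h, if_neg hbne]

lemma nfdAux_cons_self (i : ℕ) (bins items : List ℕ) :
    nfdAux d s (i :: bins) items i =
      if d i ≤ (items.map s).sum then (takeFill s (d i) items).1.toFinset else ∅ := by
  rw [nfdAux]
  by_cases h : d i ≤ (items.map s).sum
  · simp [h]
  · simp [h]

lemma remA_sublist : ∀ (L items : List ℕ), List.Sublist (remA d s L items) items := by
  intro L
  induction L with
  | nil => intro items; simp [remA]
  | cons i bins ih =>
    intro items
    rw [remA]
    split_ifs with h
    · exact (ih _).trans (takeFill_snd_sublist s _ _)
    · exact ih _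

lemma nfdAux_notMem : ∀ (L items : List ℕ) (b : ℕ), b ∉ L → nfdAux d s L items b = ∅ := by
  intro L
  induction L with
  | nil => intro items b _; simp [nfdAux]
  | cons i bins ih =>
    intro items b hb
    simp only [List.mem_cons, not_or] at hb
    rw [nfdAux_cons_ne d s i bins items b hb.1]
    split_ifs with h
    · exact ih _ _ hb.2
    · exact ih _ _ hb.2

lemma nfdAux_append₁ : ∀ (L₁ L₂ items : List ℕ) (b : ℕ), b ∉ L₁ →
    nfdAux d s (L₁ ++ L₂) items b = nfdAux d s L₂ (remA d s L₁ items) b := by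
  intro L₁
  induction L₁ with
  | nil => intro L₂ items b _; simp [remA]
  | cons i bins ih =>
    intro L₂ items b hb
    simp only [List.mem_cons, not_or] at hb
    rw [List.cons_append, nfdAux_cons_ne d s i (bins ++ L₂) items b hb.1, remA]
    split_ifs with h
    · exact ih _ _ _ hb.2
    · exact ih _ _ _ hb.2

lemma nfdAux_append₂ : ∀ (L₁ L₂ items : List ℕ) (b : ℕ), b ∉ L₂ →
    nfdAux d s (L₁ ++ L₂) items b = nfdAux d s L₁ items b := by
  intro L₁
  induction L₁ with
  | nil => intro L₂ items b hb; simp [nfdAux_notMem d s L₂ items b hb, nfdAux]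
  | cons i bins ih =>
    intro L₂ items b hb
    by_cases hbi : b = i
    · subst hbi
      rw [List.cons_append, nfdAux_cons_self, nfdAux_cons_self]
    · rw [List.cons_append, nfdAux_cons_ne d s i (bins ++ L₂) items b hbi,
        nfdAux_cons_ne d s i bins items b hbi]
      split_ifs with h
      · exact ih _ _ _ hb
      · exact ih _ _ _ hb

lemma remA_append : ∀ (L₁ L₂ items : List ℕ),
    remA d s (L₁ ++ L₂) items = remA d s L₂ (remA d s L₁ items) := by
  intro L₁
  induction L₁ with
  | nil => intro L₂ items; simp [remA]
  | cons i bins ih =>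
    intro L₂ items
    rw [List.cons_append, remA, remA]
    split_ifs with h
    · exact ih _ _
    · exact ih _ _

lemma nfdAux_zero_or_cover : ∀ (L items : List ℕ) (b : ℕ), items.Nodup →
    (∑ j ∈ nfdAux d s L items b, s j) = 0 ∨ d b ≤ ∑ j ∈ nfdAux d s L items b, s j := by
  intro L
  induction L with
  | nil => intro items b _; left; simp [nfdAux]
  | cons i bins ih =>
    intro items b hI
    by_cases hbi : b = i
    · subst hbi
      rw [nfdAux_cons_self]
      split_ifs with h
      · right
        rw [List.sum_toFinset _ (hI.sublist (takeFill_fst_sublist s _ _))]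
        exact takeFill_fst_sum s _ _ h
      · left; simp
    · rw [nfdAux_cons_ne d s i bins items b hbi]
      split_ifs with h
      · exact ih _ _ (hI.sublist (takeFill_snd_sublist s _ _))
      · exact ih _ _ hI

lemma nfdAux_conservation : ∀ (L items : List ℕ), L.Nodup → items.Nodup →
    (∑ i ∈ L.toFinset, ∑ j ∈ nfdAux d s L items i, s j)
      + ((remA d s L items).map s).sum = (items.map s).sum := by
  intro L
  induction L with
  | nil => intro items _ _; simp [remA]
  | cons i bins ih =>
    intro items hL hI
    have hiL : i ∉ bins := (List.nodup_cons.mp hL).1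
    have hbins : bins.Nodup := (List.nodup_cons.mp hL).2
    have hins : (i :: bins).toFinset = insert i bins.toFinset := by simp
    have hinotin : i ∉ bins.toFinset := by simpa using hiL
    rw [hins, Finset.sum_insert hinotin]
    have hcong : ∀ b ∈ bins.toFinset,
        (∑ j ∈ nfdAux d s (i :: bins) items b, s j)
          = ∑ j ∈ (if d i ≤ (items.map s).sum
              then nfdAux d s bins (takeFill s (d i) items).2 b
              else nfdAux d s bins items b), s j := by
      intro b hb
      have hbne : b ≠ i := by rintro rfl; exact hinotin hb
      rw [nfdAux_cons_ne d s i bins items b hbne]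
    rw [Finset.sum_congr rfl hcong, remA]
    by_cases h : d i ≤ (items.map s).sum
    · simp only [if_pos h]
      rw [nfdAux_cons_self, if_pos h]
      have h2 := ih (takeFill s (d i) items).2 hbins
        (hI.sublist (takeFill_snd_sublist s _ _))
      rw [List.sum_toFinset _ (hI.sublist (takeFill_fst_sublist s _ _))]
      have h3 : ((takeFill s (d i) items).1.map s).sum
          + (((takeFill s (d i) items).2).map s).sum = (items.map s).sum := by
        rw [← List.sum_append, ← List.map_append, takeFill_append]
      linarith
    · simp only [if_neg h]
      rw [nfdAux_cons_self, if_neg h]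
      have h2 := ih items hbins hI
      simp only [Finset.sum_empty]
      linarith


/- STATEMENT 11 -/
theorem stmt11 (m n : ℕ) (d s : ℕ → ℝ)
    (hd : ∀ i < m, 0 < d i) (hdm : ∀ i i', i ≤ i' → i' < m → d i' ≤ d i)
    (hs : ∀ j < n, 0 < s j) (hsm : ∀ j j', j ≤ j' → j' < n → s j' ≤ s j)
    (hk : 1 ≤ ((Finset.range m).filter (WellCovered d s m (Finset.range n))).card) :
    OPT d d s (Finset.range m) (Finset.range n) ≤
      (2 + 1 / (((Finset.range m).filter (WellCovered d s m (Finset.range n))).card : ℝ)) *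
        NFD d s (Finset.range m) (Finset.range n) := by
  classical
  set W := (Finset.range m).filter (WellCovered d s m (Finset.range n)) with hWdef
  set k := W.card with hkdef
  set F := NFD d s (Finset.range m) (Finset.range n) with hFdef
  have hWmem : ∀ i ∈ W, WellCovered d s m (Finset.range n) i :=
    fun i hi => (Finset.mem_filter.mp hi).2
  have hsol : nfdSol d s (Finset.range m) (Finset.range n)
      = nfdAux d s (List.range m) (List.range n) := by
    unfold nfdSol; rw [Finset.sort_range, Finset.sort_range]
  have hu : ∀ i, nfdU d s (Finset.range m) (Finset.range n) i
      = ∑ j ∈ nfdAux d s (List.range m) (List.range n) i, s j := by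
    intro i; unfold nfdU; rw [hsol]
  have hNodupn : (List.range n).Nodup := List.nodup_range
  have hcov : ∀ i, nfdU d s (Finset.range m) (Finset.range n) i = 0 ∨
      d i ≤ nfdU d s (Finset.range m) (Finset.range n) i := by
    intro i; rw [hu]; exact nfdAux_zero_or_cover d s _ _ i hNodupn
  have hNFD : F = ∑ i ∈ Finset.range m,
      if d i ≤ nfdU d s (Finset.range m) (Finset.range n) i then d i else 0 := rfl
  have hterm : ∀ i ∈ Finset.range m,
      0 ≤ (if d i ≤ nfdU d s (Finset.range m) (Finset.range n) i then d i else 0) := by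
    intro i hi
    split_ifs with hc
    · exact (hd i (Finset.mem_range.mp hi)).le
    · exact le_refl 0
  have hF0 : 0 ≤ F := by rw [hNFD]; exact Finset.sum_nonneg hterm
  -- witness function
  have hwitex : ∀ istar, ∃ ipr, istar ∈ W →
      (istar < ipr ∧ ipr < m ∧ nfdU d s (Finset.range m) (Finset.range n) ipr = 0 ∧
        ∀ i ≤ ipr, nfdU d s (Finset.range m) (Finset.range n) i ≤ 2 * d i) := by
    intro istar
    by_cases h : istar ∈ W
    · obtain ⟨i', h1, h2, h3, _, h5⟩ := (hWmem istar h).2.2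
      exact ⟨i', fun _ => ⟨h1, h2, h3, h5⟩⟩
    · exact ⟨0, fun hc => absurd hc h⟩
  choose wit hwit using hwitex
  have hWne : W.Nonempty := Finset.card_pos.mp (by omega)
  obtain ⟨i0, hi0W, hi0sup⟩ := Finset.exists_mem_eq_sup W hWne wit
  set ip := W.sup wit with hipdef
  obtain ⟨hip1, ipm, ipz, iple⟩ : i0 < ip ∧ ip < m ∧
      nfdU d s (Finset.range m) (Finset.range n) ip = 0 ∧
      ∀ i ≤ ip, nfdU d s (Finset.range m) (Finset.range n) i ≤ 2 * d i := by
    rw [hi0sup]; exact hwit i0 hi0W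
  have hdip : ∀ istar ∈ W, d ip ≤ d istar := by
    intro istar hiW
    have h1 := (hwit istar hiW).1
    have h2 : wit istar ≤ ip := Finset.le_sup hiW
    exact hdm istar ip (by omega) ipm
  have hkd : (k : ℝ) * d ip ≤ F := by
    have h1 : W.card • d ip ≤ ∑ i ∈ W, d i :=
      Finset.card_nsmul_le_sum W _ _ (fun x hx => hdip x hx)
    rw [nsmul_eq_mul] at h1
    have h2 : ∑ i ∈ W, d i = ∑ i ∈ W,
        (if d i ≤ nfdU d s (Finset.range m) (Finset.range n) i then d i else 0) := by
      apply Finset.sum_congr rfl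
      intro i hiW
      have hpos := (hWmem i hiW).2.1
      rcases hcov i with h | h
      · exact absurd h (ne_of_gt hpos)
      · rw [if_pos h]
    have h3 : ∑ i ∈ W, (if d i ≤ nfdU d s (Finset.range m) (Finset.range n) i then d i else 0)
        ≤ ∑ i ∈ Finset.range m,
          (if d i ≤ nfdU d s (Finset.range m) (Finset.range n) i then d i else 0) :=
      Finset.sum_le_sum_of_subset_of_nonneg (Finset.filter_subset _ _)
        (fun i hi _ => hterm i hi)
    rw [hNFD]
    calc (k : ℝ) * d ip ≤ ∑ i ∈ W, d i := h1
      _ ≤ _ := by rw [h2] at *; exact h3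
  -- conservation
  have hmsplit : List.range m = List.range (ip + 1) ++ (List.range (m - (ip + 1))).map ((ip + 1) + ·) := by
    rw [← List.range_add]
    congr 1
    omega
  have huagree : ∀ i ≤ ip, nfdAux d s (List.range m) (List.range n) i
      = nfdAux d s (List.range (ip + 1)) (List.range n) i := by
    intro i hi
    rw [hmsplit]
    apply nfdAux_append₂
    intro hmem
    simp only [List.mem_map, List.mem_range] at hmem
    omega
  set R := remA d s (List.range ip) (List.range n) with hRdef
  set Rsum := (R.map s).sum with hRsumdef
  have hRnodup : R.Nodup := hNodupn.sublist (remA_sublist d s _ _)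
  have hipfull : nfdAux d s (List.range (ip + 1)) (List.range n) ip
      = if d ip ≤ Rsum then (takeFill s (d ip) R).1.toFinset else ∅ := by
    rw [List.range_succ, nfdAux_append₁ d s _ _ _ _ (by simp), nfdAux_cons_self]
  have hdip_pos : 0 < d ip := hd ip ipm
  have hRlt : Rsum < d ip := by
    by_contra hcon
    push_neg at hcon
    have h1 : nfdU d s (Finset.range m) (Finset.range n) ip
        = ∑ j ∈ (takeFill s (d ip) R).1.toFinset, s j := by
      rw [hu, huagree ip le_rfl, hipfull, if_pos hcon]
    rw [List.sum_toFinset _ (hRnodup.sublist (takeFill_fst_sublist s _ _))] at h1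
    have h2 := takeFill_fst_sum s (d ip) R hcon
    rw [ipz] at h1
    linarith
  have hremip : remA d s (List.range (ip + 1)) (List.range n) = R := by
    rw [List.range_succ, remA_append, remA, if_neg (not_le.mpr hRlt)]
    rfl
  have hcons := nfdAux_conservation d s (List.range (ip + 1)) (List.range n)
    List.nodup_range hNodupn
  have htoF : (List.range (ip + 1)).toFinset = Finset.range (ip + 1) := by
    ext x; simp
  rw [htoF, hremip] at hcons
  set itemsum := ((List.range n).map s).sum with hitemdef
  have hconssum : (∑ i ∈ Finset.range (ip + 1), nfdU d s (Finset.range m) (Finset.range n) i)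
      + Rsum = itemsum := by
    rw [← hcons]
    congr 1
    apply Finset.sum_congr rfl
    intro i hi
    rw [hu, huagree i (by simp only [Finset.mem_range] at hi; omega)]
  have hsum2 : ∑ i ∈ Finset.range (ip + 1), nfdU d s (Finset.range m) (Finset.range n) i
      ≤ 2 * F := by
    have h1 : ∑ i ∈ Finset.range (ip + 1), nfdU d s (Finset.range m) (Finset.range n) i
        ≤ ∑ i ∈ Finset.range (ip + 1),
            2 * (if d i ≤ nfdU d s (Finset.range m) (Finset.range n) i then d i else 0) := by
      apply Finset.sum_le_sum
      intro i hi
      have hi' : i ≤ ip := by simp only [Finset.mem_range] at hi; omega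
      have him : i < m := lt_of_le_of_lt hi' ipm
      rcases hcov i with h | h
      · rw [h]
        have := hd i him
        split_ifs <;> linarith
      · rw [if_pos h]
        exact iple i hi'
    have h2 : ∑ i ∈ Finset.range (ip + 1),
          2 * (if d i ≤ nfdU d s (Finset.range m) (Finset.range n) i then d i else 0)
        ≤ ∑ i ∈ Finset.range m,
          2 * (if d i ≤ nfdU d s (Finset.range m) (Finset.range n) i then d i else 0) :=
      Finset.sum_le_sum_of_subset_of_nonneg
        (Finset.range_subset_range.mpr (by omega))
        (fun i hi _ => by
          have := hterm i hi
          linarith)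
    have h3 : ∑ i ∈ Finset.range m,
        2 * (if d i ≤ nfdU d s (Finset.range m) (Finset.range n) i then d i else 0)
        = 2 * F := by
      rw [hNFD, Finset.mul_sum]
    linarith
  have hitem : itemsum = ∑ j ∈ Finset.range n, s j := by
    rw [hitemdef, ← List.sum_toFinset s List.nodup_range]
    congr 1
    ext x; simp
  have hitem_nonneg : 0 ≤ itemsum := by
    rw [hitem]
    exact Finset.sum_nonneg (fun j hj => (hs j (Finset.mem_range.mp hj)).le)
  have hOPT : OPT d d s (Finset.range m) (Finset.range n) ≤ itemsum := by
    unfold OPT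
    apply Real.sSup_le _ hitem_nonneg
    rintro x ⟨S, hS, rfl⟩
    have hS' : IsSolution (Finset.range n) S := hS
    have hdisj : (↑(Finset.range m) : Set ℕ).PairwiseDisjoint S :=
      fun i _ i' _ hne => hS'.2 hne
    calc profit d d s (Finset.range m) S
        ≤ ∑ i ∈ Finset.range m, ∑ j ∈ S i, s j := by
          apply Finset.sum_le_sum
          intro i hi
          split_ifs with hc
          · exact hc
          · exact Finset.sum_nonneg
              (fun j hj => (hs j (Finset.mem_range.mp (hS'.1 i hj))).le)
      _ = ∑ j ∈ (Finset.range m).biUnion S, s j := (Finset.sum_biUnion hdisj).symm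
      _ ≤ ∑ j ∈ Finset.range n, s j := by
          apply Finset.sum_le_sum_of_subset_of_nonneg
          · intro j hj
            obtain ⟨i, _, hji⟩ := Finset.mem_biUnion.mp hj
            exact hS'.1 i hji
          · intro j hj _
            exact (hs j (Finset.mem_range.mp hj)).le
      _ = itemsum := hitem.symm
  have hk1 : (1 : ℝ) ≤ (k : ℝ) := by exact_mod_cast hk
  have hk0 : (0 : ℝ) < (k : ℝ) := by linarith
  have hdipF : d ip ≤ F / (k : ℝ) := by
    rw [le_div_iff₀ hk0]
    nlinarith
  have hfinal : (2 + 1 / (k : ℝ)) * F = 2 * F + F / (k : ℝ) := by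
    field_simp
  rw [hfinal]
  linarith

end BinCov
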